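/- arXiv:math/0601493 — 2 statements merged into one kernel-verified Lean document; each statement's English description precedes it below -/
import Mathlib

section
/- The polynomial X^4 - 4X^3 - X^2 + 4X - 1 (the characteristic polynomial of the matrix A2) has four pairwise distinct real roots, and none of these roots equals 1 or -1; hence A2 is a hyperbolic operator (it has four distinct real eigenvalues, none of absolute value 1). -/
open Matrix Polynomial

def A2R : Matrix (Fin 4) (Fin 4) ℝ :=
  !![0, 1, 0, 0; 0, 0, 1, 0; 0, 0, 0, 1; 1, -4, 1, 4]

/-- The characteristic polynomial of `A2`, as a real polynomial. -/
noncomputable def p2 : Polynomial ℝ := X ^ 4 - 4 * X ^ 3 - X ^ 2 + 4 * X - 1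

/-!
The values of `p2` at `-2, 0, 1/2, 1, 5` alternate in sign, so the intermediate value theorem
gives four distinct roots, and a quartic has no others. Since `p2 (±1) = -1`, no root is `±1`;
and `p2` is the characteristic polynomial of `A2R`, whose roots are exactly its eigenvalues.
-/

open Set

theorem exists_mem_Ioo_eq_zero_of_mul_neg {α : Type*} [ConditionallyCompleteLinearOrder α]
    [TopologicalSpace α] [OrderTopology α] [DenselyOrdered α] {f : α → ℝ} {a b : α}
    (hab : a ≤ b) (hf : ContinuousOn f (Icc a b)) (h : f a * f b < 0) :
    ∃ x ∈ Ioo a b, f x = 0 := by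
  rcases mul_neg_iff.1 h with ⟨ha, hb⟩ | ⟨ha, hb⟩
  · exact intermediate_value_Ioo' hab hf ⟨hb, ha⟩
  · exact intermediate_value_Ioo hab hf ⟨ha, hb⟩

theorem Polynomial.exists_eq_of_isRoot_of_injective {R : Type*} [CommRing R] [IsDomain R]
    {p : R[X]} (hp : p ≠ 0) {n : ℕ} (hn : p.natDegree ≤ n) {r : Fin n → R}
    (hr : Function.Injective r) (hroot : ∀ i, p.IsRoot (r i)) {x : R} (hx : p.IsRoot x) :
    ∃ i, x = r i := by
  classical
  have hsub : Finset.univ.image r ⊆ p.roots.toFinset := by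
    simpa [Finset.image_subset_iff, mem_roots hp] using hroot
  have hcard : p.roots.toFinset.card ≤ (Finset.univ.image r).card := by
    rw [Finset.card_image_of_injective _ hr, Finset.card_univ, Fintype.card_fin]
    exact (Multiset.toFinset_card_le _).trans ((card_roots' p).trans hn)
  have hx' : x ∈ Finset.univ.image r := by
    rw [Finset.eq_of_subset_of_card_le hsub hcard]
    simpa [mem_roots hp] using hx
  obtain ⟨i, -, hi⟩ := Finset.mem_image.1 hx'
  exact ⟨i, hi.symm⟩

theorem p2_eval (x : ℝ) : p2.eval x = x ^ 4 - 4 * x ^ 3 - x ^ 2 + 4 * x - 1 := by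
  simp [p2]

theorem p2_natDegree_le : p2.natDegree ≤ 4 := by
  unfold p2
  compute_degree

theorem p2_eval_one : p2.eval 1 = -1 := by
  norm_num [p2_eval]

theorem p2_eval_neg_one : p2.eval (-1) = -1 := by
  norm_num [p2_eval]

theorem p2_ne_zero : p2 ≠ 0 := fun h => by
  simpa [h] using p2_eval_one

theorem charpoly_A2R : A2R.charpoly = p2 := by
  refine Polynomial.funext fun μ => ?_
  have hmat : scalar (Fin 4) μ - A2R =
      !![μ, -1, 0, 0; 0, μ, -1, 0; 0, 0, μ, -1; -1, 4, -1, μ - 4] := by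
    ext i j
    fin_cases i <;> fin_cases j <;> simp [A2R]
  rw [eval_charpoly, hmat, p2_eval]
  simp [det_succ_row_zero, Fin.sum_univ_succ, Fin.succAbove]
  ring

theorem p2_exists_root_mem_Ioo {a b : ℝ} (hab : a ≤ b) (h : p2.eval a * p2.eval b < 0) :
    ∃ x ∈ Ioo a b, p2.IsRoot x :=
  exists_mem_Ioo_eq_zero_of_mul_neg hab p2.continuous.continuousOn h

theorem exists_strictMono_roots_p2 : ∃ r : Fin 4 → ℝ, StrictMono r ∧ ∀ i, p2.IsRoot (r i) := by
  obtain ⟨x₀, ⟨-, h₀⟩, hx₀⟩ := p2_exists_root_mem_Ioo (a := -2) (b := 0) (by norm_num)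
    (by norm_num [p2_eval])
  obtain ⟨x₁, ⟨h₁, h₁'⟩, hx₁⟩ := p2_exists_root_mem_Ioo (a := 0) (b := 1 / 2) (by norm_num)
    (by norm_num [p2_eval])
  obtain ⟨x₂, ⟨h₂, h₂'⟩, hx₂⟩ := p2_exists_root_mem_Ioo (a := 1 / 2) (b := 1) (by norm_num)
    (by norm_num [p2_eval])
  obtain ⟨x₃, ⟨h₃, -⟩, hx₃⟩ := p2_exists_root_mem_Ioo (a := 1) (b := 5) (by norm_num)
    (by norm_num [p2_eval])
  refine ⟨![x₀, x₁, x₂, x₃], Fin.strictMono_iff_lt_succ.2 fun i => ?_, fun i => ?_⟩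
  · fin_cases i <;> simp <;> linarith
  · fin_cases i <;> assumption

theorem ne_one_and_ne_neg_one_of_isRoot_p2 {x : ℝ} (hx : p2.IsRoot x) : x ≠ 1 ∧ x ≠ -1 := by
  constructor <;> rintro rfl <;> simp [IsRoot, p2_eval_one, p2_eval_neg_one] at hx

theorem statement10 :
    ∃ r : Fin 4 → ℝ,
      Function.Injective r ∧
      (∀ i, p2.eval (r i) = 0) ∧
      (∀ x : ℝ, p2.eval x = 0 → ∃ i, x = r i) ∧
      (∀ i, r i ≠ 1 ∧ r i ≠ -1) ∧
      (∀ i, r i ∈ spectrum ℝ A2R) ∧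
      (∀ i, |r i| ≠ 1) := by
  obtain ⟨r, hmono, hroot⟩ := exists_strictMono_roots_p2
  have hne i : r i ≠ 1 ∧ r i ≠ -1 := ne_one_and_ne_neg_one_of_isRoot_p2 (hroot i)
  refine ⟨r, hmono.injective, hroot, fun x hx => ?_, hne, fun i => ?_, fun i habs => ?_⟩
  · exact p2.exists_eq_of_isRoot_of_injective p2_ne_zero p2_natDegree_le hmono.injective hroot hx
  · rw [mem_spectrum_iff_isRoot_charpoly, charpoly_A2R]
    exact hroot i
  · rcases (abs_eq zero_le_one).1 habs with h | h
    exacts [(hne i).1 h, (hne i).2 h]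
end

section
/- The matrices B21, B22, B23 generate a free abelian group of rank 3: for all integers i, j, k, if B21^i · B22^j · B23^k equals the identity matrix, then i = j = k = 0. -/
open Matrix Polynomial

def A2 : Matrix (Fin 4) (Fin 4) ℚ :=
  !![0, 1, 0, 0; 0, 0, 1, 0; 0, 0, 0, 1; 1, -4, 1, 4]

lemma hdetA2 : A2.det ≠ 0 := by
  have e : (1 : Fin 4).succAbove 2 = 3 := by decide
  norm_num [A2, Matrix.det_succ_row_zero, Fin.sum_univ_succ, e,
    Matrix.cons_val_two, Matrix.cons_val_three, Matrix.vecHead, Matrix.vecTail]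

lemma hdetA2sub : (A2 - 1).det ≠ 0 := by
  have h : A2 - 1 = !![-1, 1, 0, 0; 0, -1, 1, 0; 0, 0, -1, 1; 1, -4, 1, 3] := by
    ext i j
    fin_cases i <;> fin_cases j <;>
      simp [A2, Matrix.one_apply, Matrix.vecHead, Matrix.vecTail] <;> norm_num
  rw [h]
  have e : (1 : Fin 4).succAbove 2 = 3 := by decide
  norm_num [Matrix.det_succ_row_zero, Fin.sum_univ_succ, e,
    Matrix.cons_val_two, Matrix.cons_val_three, Matrix.vecHead, Matrix.vecTail]

lemma hdetA2add : (A2 + 1).det ≠ 0 := by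
  have h : A2 + 1 = !![1, 1, 0, 0; 0, 1, 1, 0; 0, 0, 1, 1; 1, -4, 1, 5] := by
    ext i j
    fin_cases i <;> fin_cases j <;>
      simp [A2, Matrix.one_apply, Matrix.vecHead, Matrix.vecTail] <;> norm_num
  rw [h]
  have e : (1 : Fin 4).succAbove 2 = 3 := by decide
  norm_num [Matrix.det_succ_row_zero, Fin.sum_univ_succ, e,
    Matrix.cons_val_two, Matrix.cons_val_three, Matrix.vecHead, Matrix.vecTail]

noncomputable def gA2 : GL (Fin 4) ℚ := Matrix.GeneralLinearGroup.mkOfDetNeZero A2 hdetA2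
noncomputable def uA2 : GL (Fin 4) ℚ := Matrix.GeneralLinearGroup.mkOfDetNeZero (A2 - 1) hdetA2sub
noncomputable def vA2 : GL (Fin 4) ℚ := Matrix.GeneralLinearGroup.mkOfDetNeZero (A2 + 1) hdetA2add

noncomputable def B21 : GL (Fin 4) ℚ := (gA2 ^ 2)⁻¹
noncomputable def B22 : GL (Fin 4) ℚ := uA2 ^ 2 * (gA2 ^ 2)⁻¹
noncomputable def B23 : GL (Fin 4) ℚ := vA2 * gA2⁻¹

/-
At a real root `r` of the characteristic polynomial of `A2`, the vector `(1, r, r², r³)` is an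
eigenvector of `A2`, hence of `B21`, `B22`, `B23`, with eigenvalues `r⁻²`, `(r - 1)² r⁻²` and
`(r + 1) r⁻¹`. A relation `B21^i B22^j B23^k = 1` therefore gives, after taking `log |·|`, one
linear equation `2j log|r - 1| + k log|r + 1| = (2i + 2j + k) log|r|` per real root. Three real
roots `r₁ ≈ 0.30`, `r₂ ≈ -1.09`, `r₄ ≈ 4.02` suffice: the equations at `r₄` and at `r₁`, twice
the one at `r₁` plus the one at `r₄`, and the sum of those at `r₁` and `r₂` have coefficient
vectors of all four sign patterns up to a global sign. For the pattern matching the signs of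
`(2j, k, -(2i + 2j + k))` all terms have one sign, so all three numbers vanish.
-/

namespace Matrix

variable {n : Type*} [Fintype n]

theorem mul_mulVec_eq_mul_smul {R : Type*} [CommSemiring R] {M N : Matrix n n R} {v : n → R}
    {a b : R} (hM : M *ᵥ v = a • v) (hN : N *ᵥ v = b • v) : (M * N) *ᵥ v = (a * b) • v := by
  rw [← mulVec_mulVec, hN, mulVec_smul, hM, smul_smul, mul_comm]

namespace GeneralLinearGroup

variable [DecidableEq n] {K : Type*} [Field K] {W : GL n K} {s : K} {v : n → K}

theorem inv_mulVec_eq_inv_smul (hs : s ≠ 0) (hW : (W : Matrix n n K) *ᵥ v = s • v) :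
    ((W⁻¹ : GL n K) : Matrix n n K) *ᵥ v = s⁻¹ • v := by
  have h : ((W⁻¹ : GL n K) : Matrix n n K) *ᵥ ((W : Matrix n n K) *ᵥ v) = v := by
    rw [mulVec_mulVec, Units.inv_mul, one_mulVec]
  rw [hW, mulVec_smul] at h
  calc _ = s⁻¹ • s • ((W⁻¹ : GL n K) : Matrix n n K) *ᵥ v := by
        rw [smul_smul, inv_mul_cancel₀ hs, one_smul]
    _ = s⁻¹ • v := by rw [h]

theorem zpow_mulVec_eq_zpow_smul (hs : s ≠ 0) (hW : (W : Matrix n n K) *ᵥ v = s • v) (m : ℤ) :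
    ((W ^ m : GL n K) : Matrix n n K) *ᵥ v = s ^ m • v := by
  induction m using Int.induction_on with
  | zero => simp
  | succ m ih =>
    rw [_root_.zpow_add_one, zpow_add_one₀ hs, Units.val_mul]
    exact mul_mulVec_eq_mul_smul ih hW
  | pred m ih =>
    rw [_root_.zpow_sub_one, zpow_sub_one₀ hs, Units.val_mul]
    exact mul_mulVec_eq_mul_smul ih (inv_mulVec_eq_inv_smul hs hW)

end GeneralLinearGroup

end Matrix

theorem exists_mem_Icc_eq_zero_of_mul_nonpos {f : ℝ → ℝ} {a b : ℝ} (hab : a ≤ b)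
    (hf : ContinuousOn f (Set.Icc a b)) (h : f a * f b ≤ 0) : ∃ c ∈ Set.Icc a b, f c = 0 := by
  rw [← Set.uIcc_of_le hab] at hf ⊢
  exact intermediate_value_uIcc hf <| Set.mem_uIcc.mpr <| by
    rcases mul_nonpos_iff.mp h with h | h
    · exact .inr ⟨h.2, h.1⟩
    · exact .inl h

theorem eq_zero_of_forall_sign_patterns {x y z : ℝ}
    (hppp : ∃ a b c : ℝ, 0 < a ∧ 0 < b ∧ 0 < c ∧ x * a + y * b = z * c)
    (hppn : ∃ a b c : ℝ, 0 < a ∧ 0 < b ∧ c < 0 ∧ x * a + y * b = z * c)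
    (hpnp : ∃ a b c : ℝ, 0 < a ∧ b < 0 ∧ 0 < c ∧ x * a + y * b = z * c)
    (hpnn : ∃ a b c : ℝ, 0 < a ∧ b < 0 ∧ c < 0 ∧ x * a + y * b = z * c) :
    x = 0 ∧ y = 0 ∧ z = 0 := by
  wlog hx : 0 ≤ x generalizing x y z
  · have hneg : ∀ {p q r : ℝ → Prop}, (∃ a b c : ℝ, p a ∧ q b ∧ r c ∧ x * a + y * b = z * c) →
        ∃ a b c : ℝ, p a ∧ q b ∧ r c ∧ -x * a + -y * b = -z * c := by
      rintro p q r ⟨a, b, c, ha, hb, hc, h⟩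
      exact ⟨a, b, c, ha, hb, hc, by linear_combination -h⟩
    have := this (hneg hppp) (hneg hppn) (hneg hpnp) (hneg hpnn) (by linarith)
    exact ⟨neg_eq_zero.mp this.1, neg_eq_zero.mp this.2.1, neg_eq_zero.mp this.2.2⟩
  have terms_vanish : ∀ a b c : ℝ, a ≠ 0 → b ≠ 0 → c ≠ 0 → 0 ≤ x * a → 0 ≤ y * b →
      z * c ≤ 0 → x * a + y * b = z * c → x = 0 ∧ y = 0 ∧ z = 0 := by
    intro a b c ha hb hc hxa hyb hzc h
    refine ⟨?_, ?_, ?_⟩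
    · exact (mul_eq_zero.mp (by linarith : x * a = 0)).resolve_right ha
    · exact (mul_eq_zero.mp (by linarith : y * b = 0)).resolve_right hb
    · exact (mul_eq_zero.mp (by linarith : z * c = 0)).resolve_right hc
  rcases le_total 0 y with hy | hy <;> rcases le_total 0 z with hz | hz
  · obtain ⟨a, b, c, ha, hb, hc, h⟩ := hppn
    exact terms_vanish a b c ha.ne' hb.ne' hc.ne (mul_nonneg hx ha.le) (mul_nonneg hy hb.le)
      (mul_nonpos_of_nonneg_of_nonpos hz hc.le) h
  · obtain ⟨a, b, c, ha, hb, hc, h⟩ := hppp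
    exact terms_vanish a b c ha.ne' hb.ne' hc.ne' (mul_nonneg hx ha.le) (mul_nonneg hy hb.le)
      (mul_nonpos_of_nonpos_of_nonneg hz hc.le) h
  · obtain ⟨a, b, c, ha, hb, hc, h⟩ := hpnn
    exact terms_vanish a b c ha.ne' hb.ne hc.ne (mul_nonneg hx ha.le)
      (mul_nonneg_of_nonpos_of_nonpos hy hb.le) (mul_nonpos_of_nonneg_of_nonpos hz hc.le) h
  · obtain ⟨a, b, c, ha, hb, hc, h⟩ := hpnp
    exact terms_vanish a b c ha.ne' hb.ne hc.ne' (mul_nonneg hx ha.le)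
      (mul_nonneg_of_nonpos_of_nonpos hy hb.le) (mul_nonpos_of_nonpos_of_nonneg hz hc.le) h

-- `A2` is the companion matrix of this polynomial.
def charpolyA2 (x : ℝ) : ℝ := x ^ 4 - 4 * x ^ 3 - x ^ 2 + 4 * x - 1

theorem ne_zero_of_charpolyA2_eq_zero {r : ℝ} (hr : charpolyA2 r = 0) :
    r ≠ 0 ∧ r - 1 ≠ 0 ∧ r + 1 ≠ 0 := by
  refine ⟨?_, fun h => ?_, fun h => ?_⟩
  · rintro rfl; norm_num [charpolyA2] at hr
  · rw [sub_eq_zero.mp h] at hr; norm_num [charpolyA2] at hr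
  · rw [eq_neg_of_add_eq_zero_left h] at hr; norm_num [charpolyA2] at hr

theorem A2_map_mulVec_eq_smul {r : ℝ} (hr : charpolyA2 r = 0) :
    A2.map (algebraMap ℚ ℝ) *ᵥ ![1, r, r ^ 2, r ^ 3] = r • ![1, r, r ^ 2, r ^ 3] := by
  unfold charpolyA2 at hr
  ext t
  fin_cases t <;> simp [A2, mulVec, dotProduct, Fin.sum_univ_four]
  · ring
  · ring
  · linear_combination -hr

theorem eigenvalue_relation_of_charpolyA2_eq_zero {i j k : ℤ} {r : ℝ} (hr : charpolyA2 r = 0)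
    (h : B21 ^ i * B22 ^ j * B23 ^ k = 1) :
    (r ^ (-2 : ℤ)) ^ i * ((r - 1) ^ (2 : ℤ) * r ^ (-2 : ℤ)) ^ j * ((r + 1) * r ^ (-1 : ℤ)) ^ k
      = 1 := by
  obtain ⟨h0, h1, h2⟩ := ne_zero_of_charpolyA2_eq_zero hr
  set φ := GeneralLinearGroup.map (n := Fin 4) (algebraMap ℚ ℝ)
  set v : Fin 4 → ℝ := ![1, r, r ^ 2, r ^ 3]
  have hg : ((φ gA2 : GL (Fin 4) ℝ) : Matrix (Fin 4) (Fin 4) ℝ) *ᵥ v = r • v :=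
    A2_map_mulVec_eq_smul hr
  have hu : ((φ uA2 : GL (Fin 4) ℝ) : Matrix (Fin 4) (Fin 4) ℝ) *ᵥ v = (r - 1) • v := by
    change (algebraMap ℚ ℝ).mapMatrix (A2 - 1) *ᵥ v = _
    rw [map_sub, map_one, sub_mulVec, one_mulVec, sub_smul, one_smul]
    exact congrArg (· - v) hg
  have hv : ((φ vA2 : GL (Fin 4) ℝ) : Matrix (Fin 4) (Fin 4) ℝ) *ᵥ v = (r + 1) • v := by
    change (algebraMap ℚ ℝ).mapMatrix (A2 + 1) *ᵥ v = _
    rw [map_add, map_one, add_mulVec, one_mulVec, add_smul, one_smul]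
    exact congrArg (· + v) hg
  have e21 : ((φ B21 : GL (Fin 4) ℝ) : Matrix (Fin 4) (Fin 4) ℝ) *ᵥ v = r ^ (-2 : ℤ) • v := by
    rw [show φ B21 = φ gA2 ^ (-2 : ℤ) by simp [φ, B21]]
    exact GeneralLinearGroup.zpow_mulVec_eq_zpow_smul h0 hg _
  have e22 : ((φ B22 : GL (Fin 4) ℝ) : Matrix (Fin 4) (Fin 4) ℝ) *ᵥ v
      = ((r - 1) ^ (2 : ℤ) * r ^ (-2 : ℤ)) • v := by
    rw [show φ B22 = φ uA2 ^ (2 : ℤ) * φ gA2 ^ (-2 : ℤ) by simp [φ, B22], Units.val_mul]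
    exact mul_mulVec_eq_mul_smul (GeneralLinearGroup.zpow_mulVec_eq_zpow_smul h1 hu _)
      (GeneralLinearGroup.zpow_mulVec_eq_zpow_smul h0 hg _)
  have e23 : ((φ B23 : GL (Fin 4) ℝ) : Matrix (Fin 4) (Fin 4) ℝ) *ᵥ v
      = ((r + 1) * r ^ (-1 : ℤ)) • v := by
    rw [show φ B23 = φ vA2 * φ gA2 ^ (-1 : ℤ) by simp [φ, B23], Units.val_mul]
    exact mul_mulVec_eq_mul_smul hv (GeneralLinearGroup.zpow_mulVec_eq_zpow_smul h0 hg _)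
  have e := mul_mulVec_eq_mul_smul (mul_mulVec_eq_mul_smul
    (GeneralLinearGroup.zpow_mulVec_eq_zpow_smul (by simp [h0]) e21 i)
    (GeneralLinearGroup.zpow_mulVec_eq_zpow_smul (by simp [h0, h1]) e22 j))
    (GeneralLinearGroup.zpow_mulVec_eq_zpow_smul (by simp [h0, h2]) e23 k)
  rw [← Units.val_mul, ← Units.val_mul, ← map_zpow, ← map_zpow, ← map_zpow, ← map_mul, ← map_mul,
    h, map_one, Units.val_one, one_mulVec] at e
  simpa [v] using (congrFun e 0).symm

-- `Real.log x = Real.log |x|`, so negative roots need no special treatment.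
theorem log_relation_of_charpolyA2_eq_zero {i j k : ℤ} {r : ℝ} (hr : charpolyA2 r = 0)
    (h : B21 ^ i * B22 ^ j * B23 ^ k = 1) :
    (2 * j : ℤ) * Real.log (r - 1) + k * Real.log (r + 1)
      = (2 * i + 2 * j + k : ℤ) * Real.log r := by
  obtain ⟨h0, h1, h2⟩ := ne_zero_of_charpolyA2_eq_zero hr
  have hA : (r ^ (-2 : ℤ)) ^ i ≠ 0 := zpow_ne_zero _ (zpow_ne_zero _ h0)
  have hB : ((r - 1) ^ (2 : ℤ) * r ^ (-2 : ℤ)) ^ j ≠ 0 :=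
    zpow_ne_zero _ (mul_ne_zero (zpow_ne_zero _ h1) (zpow_ne_zero _ h0))
  have hC : ((r + 1) * r ^ (-1 : ℤ)) ^ k ≠ 0 :=
    zpow_ne_zero _ (mul_ne_zero h2 (zpow_ne_zero _ h0))
  have e := congrArg Real.log (eigenvalue_relation_of_charpolyA2_eq_zero hr h)
  simp only [Real.log_mul (mul_ne_zero hA hB) hC, Real.log_mul hA hB,
    Real.log_mul (zpow_ne_zero _ h1) (zpow_ne_zero _ h0), Real.log_mul h2 (zpow_ne_zero _ h0),
    Real.log_zpow, Real.log_one] at e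
  push_cast at e ⊢
  linear_combination e

open Real in
theorem eq_zero_of_log_relations {r₁ r₂ r₄ x y z : ℝ} (h₁ : r₁ ∈ Set.Icc (1 / 4) (3 / 10))
    (h₂ : r₂ ∈ Set.Icc (-11 / 10) (-21 / 20)) (h₄ : r₄ ∈ Set.Icc 4 5)
    (e₁ : x * log (r₁ - 1) + y * log (r₁ + 1) = z * log r₁)
    (e₂ : x * log (r₂ - 1) + y * log (r₂ + 1) = z * log r₂)
    (e₄ : x * log (r₄ - 1) + y * log (r₄ + 1) = z * log r₄) :
    x = 0 ∧ y = 0 ∧ z = 0 := by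
  obtain ⟨h₁l, h₁u⟩ := h₁
  obtain ⟨h₂l, h₂u⟩ := h₂
  obtain ⟨h₄l, h₄u⟩ := h₄
  have l₁a : log (r₁ - 1) < 0 := log_neg_of_lt_zero (by linarith) (by linarith)
  have l₁b : 0 < log (r₁ + 1) := log_pos (by linarith)
  have l₁c : log r₁ < 0 := log_neg (by linarith) (by linarith)
  have l₄a : 0 < log (r₄ - 1) := log_pos (by linarith)
  have l₄b : 0 < log (r₄ + 1) := log_pos (by linarith)
  have l₄c : 0 < log r₄ := log_pos (by linarith)
  have m₁₄a : 0 < 2 * log (r₁ - 1) + log (r₄ - 1) := by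
    have : 0 < log ((r₁ - 1) ^ 2 * (r₄ - 1)) := log_pos (by nlinarith)
    rwa [log_mul (by nlinarith) (by linarith), log_pow, Nat.cast_ofNat] at this
  have m₁₄c : 2 * log r₁ + log r₄ < 0 := by
    have : log (r₁ ^ 2 * r₄) < 0 := log_neg (by positivity) (by nlinarith)
    rwa [log_mul (by positivity) (by linarith), log_pow, Nat.cast_ofNat] at this
  have m₁₂a : 0 < log (r₁ - 1) + log (r₂ - 1) := by
    rw [← log_mul (by linarith) (by linarith)]
    exact log_pos (by nlinarith)
  have m₁₂b : log (r₁ + 1) + log (r₂ + 1) < 0 := by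
    rw [← log_mul (by linarith) (by linarith)]
    exact log_neg_of_lt_zero (by nlinarith) (by nlinarith)
  have m₁₂c : log r₁ + log r₂ < 0 := by
    rw [← log_mul (by linarith) (by linarith)]
    exact log_neg_of_lt_zero (by nlinarith) (by nlinarith)
  exact eq_zero_of_forall_sign_patterns
    ⟨_, _, _, l₄a, l₄b, l₄c, e₄⟩
    ⟨2 * log (r₁ - 1) + log (r₄ - 1), 2 * log (r₁ + 1) + log (r₄ + 1), 2 * log r₁ + log r₄,
      m₁₄a, by linarith, m₁₄c, by linear_combination 2 * e₁ + e₄⟩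
    ⟨-log (r₁ - 1), -log (r₁ + 1), -log r₁, by linarith, by linarith, by linarith,
      by linear_combination -e₁⟩
    ⟨_, _, _, m₁₂a, m₁₂b, m₁₂c, by linear_combination e₁ + e₂⟩

theorem statement12 (i j k : ℤ) (h : B21 ^ i * B22 ^ j * B23 ^ k = 1) :
    i = 0 ∧ j = 0 ∧ k = 0 := by
  have hcont : Continuous charpolyA2 := by unfold charpolyA2; fun_prop
  obtain ⟨r₁, hr₁, e₁⟩ := exists_mem_Icc_eq_zero_of_mul_nonpos (a := 1 / 4) (b := 3 / 10)
    (by norm_num) hcont.continuousOn (by norm_num [charpolyA2])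
  obtain ⟨r₂, hr₂, e₂⟩ := exists_mem_Icc_eq_zero_of_mul_nonpos (a := -11 / 10) (b := -21 / 20)
    (by norm_num) hcont.continuousOn (by norm_num [charpolyA2])
  obtain ⟨r₄, hr₄, e₄⟩ := exists_mem_Icc_eq_zero_of_mul_nonpos (a := 4) (b := 5)
    (by norm_num) hcont.continuousOn (by norm_num [charpolyA2])
  obtain ⟨hj, hk, hi⟩ := eq_zero_of_log_relations hr₁ hr₂ hr₄
    (log_relation_of_charpolyA2_eq_zero e₁ h) (log_relation_of_charpolyA2_eq_zero e₂ h)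
    (log_relation_of_charpolyA2_eq_zero e₄ h)
  norm_cast at hj hk hi
  omega
end
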